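/- With the normal ordering Σ_{i,j} :s_{ij}γ_{ji}: = Σ_{i>j} s_{ij}γ_{ji} + Σ_{i≤j} γ_{ji}s_{ij}, one has Σ_{i,j} :s_{ij}γ_{ji}: = Σ_{i,j} s_{ij}γ_{ji} + 2Σ_i i·γ_{ii}, and consequently [Σ_{ℓ,m} :s_{ℓm}γ_{mℓ}:, γ_{ij}]₊ = 6 s_{ij}. -/

import Mathlib

open Finset

/-- The cutoff index set `[-N, N] ⊂ ℤ`. -/
noncomputable def cutoff (N : ℕ) : Finset ℤ := Finset.Icc (-(N : ℤ)) (N : ℤ)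

/-- The normal-ordered spin operators
`s_{ij} = (1/2) Σ_m γ_{im}γ_{mj} − (N − i + 1/2)δ_{ij}`. -/
noncomputable def spinOp {A : Type*} [Ring A] [Algebra ℚ A] (N : ℕ)
    (γ : ℤ → ℤ → A) (i j : ℤ) : A :=
  (2 : ℚ)⁻¹ • ∑ l ∈ cutoff N, γ i l * γ l j -
    (if i = j then ((N : ℚ) - (i : ℚ) + (2 : ℚ)⁻¹) • (1 : A) else 0)

/-- The normal-ordered cubic sum
`Σ_{i,j} :s_{ij}γ_{ji}: = Σ_{i>j} s_{ij}γ_{ji} + Σ_{i≤j} γ_{ji}s_{ij}`. -/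
noncomputable def normalOrderedCubic {A : Type*} [Ring A] [Algebra ℚ A] (N : ℕ)
    (γ : ℤ → ℤ → A) : A :=
  ∑ i ∈ cutoff N, ∑ j ∈ cutoff N,
    if j < i then spinOp N γ i j * γ j i else γ j i * spinOp N γ i j

/-! The Clifford relations make `Q_{ij} = Σ_l γ_{il}γ_{lj}` act on the generators like `gl`:
`[γ_{ij}, Q_{lm}] = 2δ_{jl}γ_{im} - 2δ_{im}γ_{lj}`. Moving `γ_{ji}` past `s_{ij}` for `i ≤ j`
therefore costs `γ_{jj} - γ_{ii}`, and summing these corrections gives each `γ_{kk}` the weight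
`#{i ≤ k} - #{j ≥ k} = 2k`. For the anticommutator, the normal-ordered sum is
`½ Σ Q_{lm}γ_{ml} + Σ_l c_l γ_{ll}` with `c_l = 3l - N - ½`; the cubic part contributes
`3Q_{ij} - 2(2N+1)δ_{ij}` by the same commutation rule, the diagonal part `2c_iδ_{ij}`, and these
add up to `6s_{ij}`. -/

def IsCliffordFamily {ι A : Type*} [DecidableEq ι] [Ring A] (S : Finset ι) (γ : ι → ι → A) :
    Prop :=
  ∀ i ∈ S, ∀ j ∈ S, ∀ k ∈ S, ∀ l ∈ S,
    γ i j * γ k l + γ k l * γ i j = if i = l ∧ j = k then (2 : A) else 0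

def quadraticOp {ι A : Type*} [Ring A] (S : Finset ι) (γ : ι → ι → A) (i j : ι) : A :=
  ∑ l ∈ S, γ i l * γ l j

theorem mul_mul_sub_mul_mul_eq {R : Type*} [Ring R] (x a b : R) :
    x * (a * b) - a * b * x = (x * a + a * x) * b - a * (x * b + b * x) := by
  noncomm_ring

theorem mul_mul_add_mul_mul_eq {R : Type*} [Ring R] (x a b : R) :
    a * b * x + x * (a * b) = a * (b * x + x * b) + (x * a - a * x) * b := by
  noncomm_ring

namespace IsCliffordFamily

variable {ι A : Type*} [DecidableEq ι] [Ring A] {S : Finset ι} {γ : ι → ι → A}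

theorem commutator_quadraticOp (hγ : IsCliffordFamily S γ) {i j l m : ι} (hi : i ∈ S) (hj : j ∈ S)
    (hl : l ∈ S) (hm : m ∈ S) :
    γ i j * quadraticOp S γ l m - quadraticOp S γ l m * γ i j =
      (if j = l then 2 * γ i m else 0) - if i = m then 2 * γ l j else 0 := by
  rw [quadraticOp, mul_sum, sum_mul, ← sum_sub_distrib]
  simp only [mul_mul_sub_mul_mul_eq]
  rw [sum_congr rfl fun p hp => by rw [hγ i hi j hj l hl p hp, hγ i hi j hj p hp m hm]]
  simp only [sum_sub_distrib, ite_and, ite_mul, mul_ite, zero_mul, mul_zero, sum_ite_eq,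
    sum_ite_irrel, sum_const_zero, hi, hj, if_true, mul_two, two_mul]

theorem sum_mul_eq_sub_quadraticOp (hγ : IsCliffordFamily S γ) {i j : ι} (hi : i ∈ S) (hj : j ∈ S) :
    ∑ l ∈ S, γ l j * γ i l = (if i = j then 2 * (#S : A) else 0) - quadraticOp S γ i j := by
  rw [quadraticOp, eq_sub_iff_add_eq, ← sum_add_distrib,
    sum_congr rfl fun l hl => hγ l hl j hj i hi l hl]
  simp [eq_comm, Nat.cast_comm]

theorem anticomm_sum_quadraticOp_mul (hγ : IsCliffordFamily S γ) {i j : ι} (hi : i ∈ S)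
    (hj : j ∈ S) :
    (∑ l ∈ S, ∑ m ∈ S, quadraticOp S γ l m * γ m l) * γ i j +
        γ i j * ∑ l ∈ S, ∑ m ∈ S, quadraticOp S γ l m * γ m l =
      6 • quadraticOp S γ i j - if i = j then (4 * #S) • (1 : A) else 0 := by
  simp only [sum_mul, mul_sum, ← sum_add_distrib, mul_mul_add_mul_mul_eq]
  rw [sum_congr rfl fun l hl => sum_congr rfl fun m hm => by
    rw [hγ m hm l hl i hi j hj, hγ.commutator_quadraticOp hi hj hl hm]]
  simp only [sum_add_distrib, sub_mul, sum_sub_distrib, ite_and, ite_mul, mul_ite, zero_mul,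
    mul_zero, sum_ite_eq, sum_ite_eq', sum_ite_irrel, sum_const_zero, hi, hj, if_true, mul_assoc,
    ← mul_sum]
  rw [← quadraticOp, hγ.sum_mul_eq_sub_quadraticOp hi hj]
  split_ifs
  · rw [nsmul_one, Nat.cast_mul, Nat.cast_ofNat]
    noncomm_ring
  · noncomm_ring

theorem anticomm_sum_smul_diag {R : Type*} [CommSemiring R] [Algebra R A]
    (hγ : IsCliffordFamily S γ) (c : ι → R) {i j : ι} (hi : i ∈ S) (hj : j ∈ S) :
    (∑ l ∈ S, c l • γ l l) * γ i j + γ i j * ∑ l ∈ S, c l • γ l l =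
      if i = j then (2 * c i) • (1 : A) else 0 := by
  simp only [sum_mul, mul_sum, ← sum_add_distrib, smul_mul_assoc, mul_smul_comm, ← smul_add]
  rw [sum_congr rfl fun l hl => by rw [hγ l hl l hl i hi j hj]]
  simp only [smul_ite, smul_zero, ite_and, sum_ite_eq', hj, if_true]
  by_cases h : i = j
  · subst h
    rw [if_pos rfl, if_pos rfl, two_mul, add_smul, ← smul_add, one_add_one_eq_two]
  · rw [if_neg (Ne.symm h), if_neg h]

end IsCliffordFamily

theorem sum_sum_ite_le_sub {ι M : Type*} [LinearOrder ι] [AddCommGroup M] (S : Finset ι)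
    (f : ι → M) :
    ∑ i ∈ S, ∑ j ∈ S, (if i ≤ j then f j - f i else 0) =
      ∑ k ∈ S, ((#{i ∈ S | i ≤ k} : ℤ) - #{j ∈ S | k ≤ j}) • f k := by
  have hsplit : ∀ i j, (if i ≤ j then f j - f i else 0) =
      (if i ≤ j then f j else 0) - if i ≤ j then f i else 0 := fun i j => by
    split_ifs <;> simp
  simp only [hsplit, sum_sub_distrib]
  rw [sum_comm (s := S) (t := S) (f := fun i j => if i ≤ j then f j else 0)]
  simp only [← sum_filter, sum_const, sub_smul, natCast_zsmul, ← sum_sub_distrib]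

theorem card_cutoff (N : ℕ) : #(cutoff N) = 2 * N + 1 := by
  simp [cutoff, Int.card_Icc]
  omega

theorem card_filter_le_sub_card_filter_ge_of_mem_cutoff {N : ℕ} {k : ℤ} (hk : k ∈ cutoff N) :
    (#{i ∈ cutoff N | i ≤ k} : ℤ) - #{j ∈ cutoff N | k ≤ j} = 2 * k := by
  have hle : {i ∈ cutoff N | i ≤ k} = Icc (-(N : ℤ)) k := by
    ext; simp only [cutoff, mem_filter, mem_Icc] at hk ⊢; omega
  have hge : {j ∈ cutoff N | k ≤ j} = Icc k N := by
    ext; simp only [cutoff, mem_filter, mem_Icc] at hk ⊢; omega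
  simp only [cutoff, mem_Icc] at hk
  rw [hle, hge, Int.card_Icc, Int.card_Icc]
  omega

section Spin

variable {A : Type*} [Ring A] [Algebra ℚ A] {N : ℕ} {γ : ℤ → ℤ → A}

theorem spinOp_eq (i j : ℤ) : spinOp N γ i j = (2 : ℚ)⁻¹ • quadraticOp (cutoff N) γ i j -
    if i = j then ((N : ℚ) - i + 2⁻¹) • (1 : A) else 0 := rfl

theorem commutator_spinOp (hγ : IsCliffordFamily (cutoff N) γ) {i j : ℤ} (hi : i ∈ cutoff N)
    (hj : j ∈ cutoff N) :
    γ j i * spinOp N γ i j - spinOp N γ i j * γ j i = γ j j - γ i i := by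
  have hQ := hγ.commutator_quadraticOp hj hi hi hj
  have hD : Commute (γ j i) (if i = j then ((N : ℚ) - i + 2⁻¹) • (1 : A) else 0) := by
    split_ifs
    · exact (Commute.one_right _).smul_right _
    · exact Commute.zero_right _
  simp only [if_true] at hQ
  rw [spinOp_eq, mul_sub, sub_mul, hD.eq, sub_sub_sub_cancel_right, mul_smul_comm, smul_mul_assoc,
    ← smul_sub, hQ, two_mul, two_mul]
  module

theorem normalOrderedCubic_eq (hγ : IsCliffordFamily (cutoff N) γ) :
    normalOrderedCubic N γ =
      (∑ i ∈ cutoff N, ∑ j ∈ cutoff N, spinOp N γ i j * γ j i) +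
        ∑ i ∈ cutoff N, ((2 : ℚ) * (i : ℚ)) • γ i i := by
  have hterm : ∀ i ∈ cutoff N, ∀ j ∈ cutoff N,
      (if j < i then spinOp N γ i j * γ j i else γ j i * spinOp N γ i j) =
        spinOp N γ i j * γ j i + if i ≤ j then γ j j - γ i i else 0 := by
    intro i hi j hj
    by_cases h : j < i
    · rw [if_pos h, if_neg (not_le.2 h), add_zero]
    · rw [if_neg h, if_pos (not_lt.1 h), ← commutator_spinOp hγ hi hj, add_sub_cancel]
  have hcount : ∀ k ∈ cutoff N,
      ((#{i ∈ cutoff N | i ≤ k} : ℤ) - #{j ∈ cutoff N | k ≤ j}) • γ k k =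
        ((2 : ℚ) * (k : ℚ)) • γ k k := by
    intro k hk
    rw [card_filter_le_sub_card_filter_ge_of_mem_cutoff hk, ← Int.cast_smul_eq_zsmul ℚ]
    push_cast
    rfl
  rw [normalOrderedCubic, sum_congr rfl fun i hi => sum_congr rfl (hterm i hi)]
  simp only [sum_add_distrib]
  rw [sum_sum_ite_le_sub, sum_congr rfl hcount]

theorem sum_spinOp_mul :
    ∑ i ∈ cutoff N, ∑ j ∈ cutoff N, spinOp N γ i j * γ j i =
      (2 : ℚ)⁻¹ • (∑ i ∈ cutoff N, ∑ j ∈ cutoff N, quadraticOp (cutoff N) γ i j * γ j i) -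
        ∑ i ∈ cutoff N, ((N : ℚ) - i + 2⁻¹) • γ i i := by
  simp only [spinOp_eq, sub_mul, smul_mul_assoc, ite_mul, one_mul, zero_mul, sum_sub_distrib,
    smul_sum, sum_ite_eq]
  congr 1
  exact sum_congr rfl fun i hi => if_pos hi

end Spin

/-- With the normal ordering `Σ :s_{ij}γ_{ji}: = Σ_{i>j} s_{ij}γ_{ji} + Σ_{i≤j} γ_{ji}s_{ij}`,
one has `Σ_{i,j} :s_{ij}γ_{ji}: = Σ_{i,j} s_{ij}γ_{ji} + 2 Σ_i i γ_{ii}`, and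
consequently `[Σ_{ℓ,m} :s_{ℓm}γ_{mℓ}:, γ_{ij}]₊ = 6 s_{ij}`. -/
theorem normalOrderedCubic_eq_and_anticommutator {A : Type*} [Ring A] [Algebra ℚ A]
    (N : ℕ) (γ : ℤ → ℤ → A)
    (hγ : ∀ i ∈ cutoff N, ∀ j ∈ cutoff N, ∀ k ∈ cutoff N, ∀ l ∈ cutoff N,
      γ i j * γ k l + γ k l * γ i j =
        if i = l ∧ j = k then (2 : A) else 0) :
    (normalOrderedCubic N γ =
      (∑ i ∈ cutoff N, ∑ j ∈ cutoff N, spinOp N γ i j * γ j i) +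
        ∑ i ∈ cutoff N, ((2 : ℚ) * (i : ℚ)) • γ i i) ∧
    (∀ i ∈ cutoff N, ∀ j ∈ cutoff N,
      normalOrderedCubic N γ * γ i j + γ i j * normalOrderedCubic N γ =
        (6 : ℚ) • spinOp N γ i j) := by
  replace hγ : IsCliffordFamily (cutoff N) γ := hγ
  refine ⟨normalOrderedCubic_eq hγ, fun i hi j hj => ?_⟩
  rw [normalOrderedCubic_eq hγ, sum_spinOp_mul, sub_add, ← sum_sub_distrib]
  simp only [← sub_smul]
  rw [sub_mul, mul_sub, sub_add_sub_comm, smul_mul_assoc, mul_smul_comm, ← smul_add,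
    hγ.anticomm_sum_quadraticOp_mul hi hj, hγ.anticomm_sum_smul_diag _ hi hj, card_cutoff,
    spinOp_eq]
  split_ifs with h
  · subst h
    module
  · module
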